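/- Let (c_1,...,c_r) be natural numbers with c = max_i c_i, Z_1,...,Z_r independent Bernoulli(p), S_j = Σ_{i≤j} c_i Z_i, μ_j = E[S_j], μ = μ_r. Then for all u ≥ 0, P(max_{1≤j≤r}(μ_j − S_j) ≥ u) ≤ exp(−u²/(2cμ)). -/

import Mathlib

/-!
The process `exp (t S'_n)`, where `S'_n = Σ_{i ≤ n} c_i (p - Z_i)` is the lower deviation of the
weighted sum, is a nonnegative submartingale for every `t ≥ 0`: its increments are independent of
the past and each has expectation `p e^{t c_i (p-1)} + (1-p) e^{t c_i p} ≥ 1` by convexity of `exp`.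
Doob's maximal inequality therefore bounds `P(max_j S'_j ≥ u)` by
`e^{-tu} ∏_i E e^{t c_i (p - Z_i)} ≤ e^{-tu + t² Σ_i p c_i² / 2} ≤ e^{-tu + t² c μ / 2}`,
and `t = u / (c μ)` gives the claim.
-/

open MeasureTheory ProbabilityTheory Finset Real

lemma exp_neg_le_one_sub_add_sq_div_two {a : ℝ} (ha : 0 ≤ a) : exp (-a) ≤ 1 - a + a ^ 2 / 2 := by
  rw [exp_neg, inv_le_iff_one_le_mul₀ (exp_pos a)]
  calc 1 ≤ (1 - a + a ^ 2 / 2) * (1 + a + a ^ 2 / 2) := by nlinarith [sq_nonneg (a ^ 2)]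
    _ ≤ (1 - a + a ^ 2 / 2) * exp a := by
      gcongr
      · nlinarith [sq_nonneg (a - 1)]
      · exact quadratic_le_exp_of_nonneg ha

lemma one_le_bernoulli_mgf {p : ℝ} (hp0 : 0 ≤ p) (hp1 : p ≤ 1) (a : ℝ) :
    1 ≤ p * exp (a * (p - 1)) + (1 - p) * exp (a * p) := by
  have h := convexOn_exp.2 (Set.mem_univ (a * (p - 1))) (Set.mem_univ (a * p)) hp0
    (sub_nonneg.2 hp1) (by ring)
  simp only [smul_eq_mul] at h
  calc 1 = exp (p * (a * (p - 1)) + (1 - p) * (a * p)) := by rw [← exp_zero]; ring_nf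
    _ ≤ _ := h

lemma bernoulli_mgf_le {p a : ℝ} (hp0 : 0 ≤ p) (ha : 0 ≤ a) :
    p * exp (a * (p - 1)) + (1 - p) * exp (a * p) ≤ exp (p * a ^ 2 / 2) := by
  have hsplit : ∀ b, exp (a * p + b) = exp (a * p) * exp b := fun b => exp_add _ _
  calc p * exp (a * (p - 1)) + (1 - p) * exp (a * p)
      = exp (a * p) * (1 + p * (exp (-a) - 1)) := by
        rw [show a * (p - 1) = a * p + -a by ring, hsplit]; ring
    _ ≤ exp (a * p) * exp (p * (-a + a ^ 2 / 2)) := by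
        gcongr
        calc 1 + p * (exp (-a) - 1) ≤ 1 + p * (-a + a ^ 2 / 2) := by
              gcongr; linarith [exp_neg_le_one_sub_add_sq_div_two ha]
          _ ≤ _ := by linarith [add_one_le_exp (p * (-a + a ^ 2 / 2))]
    _ = exp (p * a ^ 2 / 2) := by rw [← hsplit]; ring_nf

lemma prod_bernoulli_mgf_le {ι : Type*} [Fintype ι] {w : ι → ℝ} {W p t : ℝ}
    (hw : ∀ i, 0 ≤ w i) (hwW : ∀ i, w i ≤ W) (hp0 : 0 ≤ p) (hp1 : p ≤ 1) (ht : 0 ≤ t) :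
    ∏ i, (p * exp (t * w i * (p - 1)) + (1 - p) * exp (t * w i * p)) ≤
      exp (t ^ 2 * (W * (p * ∑ i, w i)) / 2) := by
  calc ∏ i, (p * exp (t * w i * (p - 1)) + (1 - p) * exp (t * w i * p))
      ≤ ∏ i, exp (p * (t * w i) ^ 2 / 2) :=
        prod_le_prod (fun i _ => zero_le_one.trans (one_le_bernoulli_mgf hp0 hp1 _))
          fun i _ => bernoulli_mgf_le hp0 (mul_nonneg ht (hw i))
    _ = exp (∑ i, t ^ 2 * p / 2 * (w i * w i)) := by
        rw [← exp_sum]; ring_nf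
    _ ≤ exp (∑ i, t ^ 2 * p / 2 * (W * w i)) :=
        exp_le_exp.2 (sum_le_sum fun i _ => mul_le_mul_of_nonneg_left
          (mul_le_mul_of_nonneg_right (hwW i) (hw i)) (by positivity))
    _ = exp (t ^ 2 * (W * (p * ∑ i, w i)) / 2) := by
        rw [← mul_sum, ← mul_sum]; ring_nf

section Bernoulli

variable {Ω : Type*} [MeasurableSpace Ω] {P : Measure Ω} [IsProbabilityMeasure P] {Z : Ω → ℝ}
  {p : ℝ}

lemma integral_comp_of_bernoulli (hZ : Measurable Z) (hp0 : 0 ≤ p) (hp1 : p ≤ 1)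
    (h1 : P {ω | Z ω = 1} = ENNReal.ofReal p) (h0 : P {ω | Z ω = 0} = ENNReal.ofReal (1 - p))
    (g : ℝ → ℝ) :
    ∫ ω, g (Z ω) ∂P = p * g 1 + (1 - p) * g 0 := by
  have hZ1 : MeasurableSet {ω | Z ω = 1} := hZ (measurableSet_singleton 1)
  have hZ0 : MeasurableSet {ω | Z ω = 0} := hZ (measurableSet_singleton 0)
  have hcompl : {ω | Z ω = 0} =ᵐ[P] ({ω | Z ω = 1}ᶜ : Set Ω) := by
    refine ae_eq_of_subset_of_measure_ge (fun ω hω h => ?_) ?_ hZ0.nullMeasurableSet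
      (measure_ne_top _ _)
    · simp_all
    · rw [measure_compl hZ1 (measure_ne_top _ _), measure_univ, h1, h0,
        ENNReal.ofReal_sub _ hp0, ENNReal.ofReal_one]
  have hae : ∀ᵐ ω ∂P, g (Z ω) =
      {ω | Z ω = 1}.indicator (fun _ => g 1) ω + {ω | Z ω = 0}.indicator (fun _ => g 0) ω := by
    filter_upwards [hcompl.mem_iff] with ω hω
    by_cases h : Z ω = 1
    · simp [Set.indicator, h]
    · simp [Set.indicator, hω.2 h]
  rw [integral_congr_ae hae, integral_add ((integrable_const _).indicator hZ1)
    ((integrable_const _).indicator hZ0), integral_indicator_const _ hZ1,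
    integral_indicator_const _ hZ0, measureReal_def, measureReal_def, h1, h0,
    ENNReal.toReal_ofReal hp0, ENNReal.toReal_ofReal (sub_nonneg.2 hp1), smul_eq_mul, smul_eq_mul]

lemma mgf_mul_sub_of_bernoulli (hZ : Measurable Z) (hp0 : 0 ≤ p) (hp1 : p ≤ 1)
    (h1 : P {ω | Z ω = 1} = ENNReal.ofReal p) (h0 : P {ω | Z ω = 0} = ENNReal.ofReal (1 - p))
    (w t : ℝ) :
    mgf (fun ω => w * (p - Z ω)) P t = p * exp (t * w * (p - 1)) + (1 - p) * exp (t * w * p) := by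
  rw [mgf, integral_comp_of_bernoulli hZ hp0 hp1 h1 h0 fun z => exp (t * (w * (p - z)))]
  ring_nf

end Bernoulli

section PartialSum

variable {Ω : Type*} {r : ℕ} {X : Fin r → Ω → ℝ}

-- Indexed by `ℕ`, and constant from `n = r - 1` on, so that Doob's `maximal_ineq` applies.
def partialSum (X : Fin r → Ω → ℝ) (n : ℕ) (ω : Ω) : ℝ :=
  ∑ i ∈ univ.filter (fun i : Fin r => (i : ℕ) ≤ n), X i ω

lemma partialSum_add_sum_Ioc {m n : ℕ} (hmn : m ≤ n) (ω : Ω) :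
    partialSum X n ω =
      partialSum X m ω + ∑ i ∈ univ.filter (fun i : Fin r => m < i ∧ i ≤ n), X i ω := by
  simp only [partialSum, sum_filter, ← sum_add_distrib]
  refine sum_congr rfl fun i _ => ?_
  split_ifs <;> first | (exfalso; omega) | simp

end PartialSum

lemma measurable_iSup_comap {Ω ι : Type*} {X : ι → Ω → ℝ} {S : ι → Prop} {i : ι} (hi : S i) :
    Measurable[⨆ (k) (_ : S k), MeasurableSpace.comap (X k) inferInstance] (X i) :=
  Measurable.of_comap_le (le_iSup₂ (f := fun k (_ : S k) => MeasurableSpace.comap (X k) _) i hi)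

section MaximalInequality

variable {Ω : Type*} [m0 : MeasurableSpace Ω] {P : Measure Ω} {r : ℕ} {X : Fin r → Ω → ℝ}
  {t : ℝ}

def prefixFiltration (X : Fin r → Ω → ℝ) (hX : ∀ i, Measurable (X i)) : Filtration ℕ m0 where
  seq n := ⨆ (i : Fin r) (_ : (i : ℕ) ≤ n), MeasurableSpace.comap (X i) inferInstance
  mono' _ _ hmn := biSup_mono fun _ hi => hi.trans hmn
  le' _ := iSup₂_le fun i _ => (hX i).comap_le

lemma indep_prefixFiltration (hX : ∀ i, Measurable (X i)) (hindep : iIndepFun X P) (n : ℕ) :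
    Indep (prefixFiltration X hX n)
      (⨆ (i : Fin r) (_ : n < (i : ℕ)), MeasurableSpace.comap (X i) inferInstance) P :=
  indep_iSup_of_disjoint (fun i => (hX i).comap_le) hindep
    (S := {i | (i : ℕ) ≤ n}) (T := {i | n < (i : ℕ)})
    (Set.disjoint_left.2 fun _ h h' => (Nat.not_lt.2 h) h')

lemma measurable_partialSum_prefixFiltration (hX : ∀ i, Measurable (X i)) (n : ℕ) :
    Measurable[prefixFiltration X hX n] (partialSum X n) :=
  Finset.measurable_sum _ fun _ hi => measurable_iSup_comap (mem_filter.1 hi).2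

-- `mgf Y P t` is the junk value `0` when `exp (t * Y)` is not integrable.
lemma integrable_exp_mul_of_one_le_mgf {Y : Ω → ℝ} (h : 1 ≤ mgf Y P t) :
    Integrable (fun ω => exp (t * Y ω)) P :=
  Integrable.of_integral_ne_zero (by rw [mgf] at h; linarith)

lemma setIntegral_exp_mul_partialSum_mono (hX : ∀ i, Measurable (X i)) (hindep : iIndepFun X P)
    (hmgf : ∀ i, 1 ≤ mgf (X i) P t) {m n : ℕ} (hmn : m ≤ n) {s : Set Ω}
    (hs : MeasurableSet[prefixFiltration X hX m] s) :
    ∫ ω in s, exp (t * partialSum X m ω) ∂P ≤ ∫ ω in s, exp (t * partialSum X n ω) ∂P := by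
  set T := univ.filter (fun i : Fin r => m < i ∧ i ≤ n)
  set R := fun ω => ∑ i ∈ T, X i ω
  have hs₀ : MeasurableSet s := (prefixFiltration X hX).le m s hs
  have hF : Measurable[prefixFiltration X hX m]
      (s.indicator fun ω => exp (t * partialSum X m ω)) :=
    (measurable_exp.comp
      ((measurable_partialSum_prefixFiltration hX m).const_mul t)).indicator hs
  have hG : Measurable[⨆ (i : Fin r) (_ : m < (i : ℕ)), MeasurableSpace.comap (X i) inferInstance]
      (fun ω => exp (t * R ω)) :=
    measurable_exp.comp ((Finset.measurable_sum _ fun _ hi =>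
      measurable_iSup_comap (mem_filter.1 hi).2.1).const_mul t)
  have hind : IndepFun (s.indicator fun ω => exp (t * partialSum X m ω))
      (fun ω => exp (t * R ω)) P :=
    indep_of_indep_of_le_right (indep_of_indep_of_le_left (indep_prefixFiltration hX hindep m)
      hF.comap_le) hG.comap_le
  have hR : 1 ≤ mgf R P t := by
    have h := hindep.mgf_sum hX T (t := t)
    rw [Finset.sum_fn] at h
    rw [h]
    exact one_le_prod fun i _ => hmgf i
  calc ∫ ω in s, exp (t * partialSum X m ω) ∂P
      ≤ (∫ ω in s, exp (t * partialSum X m ω) ∂P) * mgf R P t :=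
        le_mul_of_one_le_right (setIntegral_nonneg_of_ae (ae_of_all _ fun _ => (exp_pos _).le)) hR
    _ = ∫ ω, (s.indicator fun ω => exp (t * partialSum X m ω)) ω * exp (t * R ω) ∂P := by
        rw [hind.integral_fun_mul_eq_mul_integral
          (hF.mono ((prefixFiltration X hX).le m) le_rfl).aestronglyMeasurable
          (hG.mono (iSup₂_le fun i _ => (hX i).comap_le) le_rfl).aestronglyMeasurable,
          integral_indicator hs₀]
        rfl
    _ = ∫ ω in s, exp (t * partialSum X n ω) ∂P := by
        rw [← integral_indicator hs₀]
        congr 1 with ω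
        simp only [partialSum_add_sum_Ioc hmn, Set.indicator, mul_add, exp_add]
        split_ifs <;> simp [R, T]

lemma integral_exp_mul_partialSum_of_le (hX : ∀ i, Measurable (X i)) (hindep : iIndepFun X P)
    {n : ℕ} (hn : r ≤ n) :
    ∫ ω, exp (t * partialSum X n ω) ∂P = ∏ i, mgf (X i) P t := by
  have hall : univ.filter (fun i : Fin r => (i : ℕ) ≤ n) = univ :=
    filter_true_of_mem fun i _ => (i.2.trans_le hn).le
  have h := hindep.mgf_sum hX (univ.filter (fun i : Fin r => (i : ℕ) ≤ n)) (t := t)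
  rw [Finset.sum_fn, hall] at h
  simpa only [mgf, partialSum, hall] using h

variable [IsProbabilityMeasure P]

lemma submartingale_exp_mul_partialSum (hX : ∀ i, Measurable (X i)) (hindep : iIndepFun X P)
    (hmgf : ∀ i, 1 ≤ mgf (X i) P t) :
    Submartingale (fun n ω => exp (t * partialSum X n ω)) (prefixFiltration X hX) P := by
  refine submartingale_of_setIntegral_le (fun n => ?_) (fun n => ?_)
    (fun m n hmn s hs => setIntegral_exp_mul_partialSum_mono hX hindep hmgf hmn hs)
  · exact (measurable_exp.comp
      ((measurable_partialSum_prefixFiltration hX n).const_mul t)).stronglyMeasurable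
  · simpa [partialSum, Finset.sum_fn] using
      hindep.integrable_exp_mul_sum hX (s := univ.filter (fun i : Fin r => (i : ℕ) ≤ n))
        fun i _ => integrable_exp_mul_of_one_le_mgf (hmgf i)

theorem measure_exists_partialSum_ge_le (hX : ∀ i, Measurable (X i)) (hindep : iIndepFun X P)
    (ht : 0 ≤ t) (hmgf : ∀ i, 1 ≤ mgf (X i) P t) (u : ℝ) :
    P {ω | ∃ j : Fin r, u ≤ partialSum X j ω} ≤
      ENNReal.ofReal (exp (-(t * u)) * ∏ i, mgf (X i) P t) := by
  set f := fun n ω => exp (t * partialSum X n ω)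
  have hsub := submartingale_exp_mul_partialSum hX hindep hmgf
  set D := {ω | ((exp (t * u)).toNNReal : ℝ) ≤
    (range (r + 1)).sup' nonempty_range_add_one fun k => f k ω}
  have hAD : {ω | ∃ j : Fin r, u ≤ partialSum X j ω} ⊆ D := by
    rintro ω ⟨j, hj⟩
    rw [Set.mem_ofPred_eq, Real.coe_toNNReal _ (exp_pos _).le]
    exact le_sup'_of_le _ (mem_range.2 (Nat.lt_succ_of_lt j.2))
      (exp_le_exp.2 (mul_le_mul_of_nonneg_left hj ht))
  calc P {ω | ∃ j : Fin r, u ≤ partialSum X j ω} ≤ P D := measure_mono hAD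
    _ = ENNReal.ofReal (exp (-(t * u))) * ((exp (t * u)).toNNReal * P D) := by
        rw [← mul_assoc, ENNReal.ofNNReal_toNNReal, ← ENNReal.ofReal_mul (exp_pos _).le,
          ← exp_add, neg_add_cancel, exp_zero, ENNReal.ofReal_one, one_mul]
    _ ≤ ENNReal.ofReal (exp (-(t * u))) * ENNReal.ofReal (∫ ω, f r ω ∂P) := by
        gcongr
        exact (maximal_ineq hsub (fun n ω => (exp_pos _).le) r).trans
          (ENNReal.ofReal_le_ofReal (setIntegral_le_integral (hsub.integrable r)
            (ae_of_all _ fun ω => (exp_pos _).le)))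
    _ = _ := by
        rw [integral_exp_mul_partialSum_of_le hX hindep le_rfl,
          ← ENNReal.ofReal_mul (exp_pos _).le]

end MaximalInequality

theorem weighted_chernoff_lower_general {Ω : Type*} [MeasurableSpace Ω]
    (P : Measure Ω) [IsProbabilityMeasure P]
    (r : ℕ) (c : Fin r → ℕ)
    (cmax : ℕ) (hcmax : cmax = Finset.univ.sup c)
    (p : ℝ) (hp0 : 0 ≤ p) (hp1 : p ≤ 1)
    (Z : Fin r → Ω → ℝ) (hmeas : ∀ i, Measurable (Z i))
    (hindep : ProbabilityTheory.iIndepFun Z P)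
    (hbern : ∀ i, P {ω | Z i ω = 1} = ENNReal.ofReal p ∧
                  P {ω | Z i ω = 0} = ENNReal.ofReal (1 - p))
    (u : ℝ) (hu : 0 ≤ u) :
    P {ω | ∃ j : Fin r,
        u ≤ p * (∑ i ∈ Finset.univ.filter (· ≤ j), (c i : ℝ))
              - (∑ i ∈ Finset.univ.filter (· ≤ j), (c i : ℝ) * Z i ω)}
      ≤ ENNReal.ofReal
          (Real.exp (-(u ^ 2) /
            (2 * cmax * (p * (∑ i : Fin r, (c i : ℝ)))))) := by
  set K := (cmax : ℝ) * (p * ∑ i, (c i : ℝ)) with hKdef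
  rcases (show 0 ≤ K by positivity).eq_or_lt with hK | hK
  · rw [mul_assoc, show (cmax : ℝ) * (p * ∑ i, (c i : ℝ)) = 0 from hK.symm, mul_zero, div_zero,
      exp_zero, ENNReal.ofReal_one]
    exact prob_le_one
  set X := fun i ω => (c i : ℝ) * (p - Z i ω)
  set t := u / K with htdef
  have ht : 0 ≤ t := by positivity
  have hmgf (i : Fin r) :
      mgf (X i) P t = p * exp (t * c i * (p - 1)) + (1 - p) * exp (t * c i * p) :=
    mgf_mul_sub_of_bernoulli (hmeas i) hp0 hp1 (hbern i).1 (hbern i).2 (c i) t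
  have hevent (j : Fin r) (ω : Ω) : p * (∑ i ∈ univ.filter (· ≤ j), (c i : ℝ)) -
      ∑ i ∈ univ.filter (· ≤ j), (c i : ℝ) * Z i ω = partialSum X j ω := by
    rw [partialSum, mul_sum, ← sum_sub_distrib]
    exact sum_congr rfl fun i _ => by ring
  simp only [hevent]
  calc _ ≤ ENNReal.ofReal (exp (-(t * u)) * ∏ i, mgf (X i) P t) :=
        measure_exists_partialSum_ge_le (fun i => (hmeas i).const_sub p |>.const_mul _)
          (hindep.comp _ fun i => (measurable_const_sub p).const_mul _) ht
          (fun i => hmgf i ▸ one_le_bernoulli_mgf hp0 hp1 _) u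
    _ ≤ ENNReal.ofReal (exp (-(t * u)) * exp (t ^ 2 * K / 2)) := by
        simp only [hmgf]
        gcongr
        exact prod_bernoulli_mgf_le (fun i => Nat.cast_nonneg _)
          (fun i => Nat.cast_le.2 (hcmax ▸ le_sup (mem_univ i))) hp0 hp1 ht
    _ = _ := by
        rw [← exp_add, mul_assoc 2, ← hKdef, htdef]
        congr 2
        field_simp
        ring

/-- weighted Chernoff maximal lower-tail inequality: with `c₁,…,c_r` positive
integers of maximum `cmax`, `Z₁,…,Z_r` independent Bernoulli(`p`), `S_j = Σ_{i≤j} c_i Z_i`,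
`μ_j = p Σ_{i≤j} c_i` and `μ = μ_r`, for all `u ≥ 0`,
`P(max_j (μ_j − S_j) ≥ u) ≤ exp(−u²/(2 cmax μ))`. -/
theorem weighted_chernoff_lower {Ω : Type*} [MeasurableSpace Ω]
    (P : Measure Ω) [IsProbabilityMeasure P]
    (r : ℕ) (hr : 0 < r) (c : Fin r → ℕ) (hc : ∀ i, 0 < c i)
    (cmax : ℕ) (hcmax : cmax = Finset.univ.sup c)
    (p : ℝ) (hp0 : 0 ≤ p) (hp1 : p ≤ 1)
    (Z : Fin r → Ω → ℝ) (hmeas : ∀ i, Measurable (Z i))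
    (hindep : ProbabilityTheory.iIndepFun Z P)
    (hbern : ∀ i, P {ω | Z i ω = 1} = ENNReal.ofReal p ∧
                  P {ω | Z i ω = 0} = ENNReal.ofReal (1 - p))
    (u : ℝ) (hu : 0 ≤ u) :
    P {ω | ∃ j : Fin r,
        u ≤ p * (∑ i ∈ Finset.univ.filter (· ≤ j), (c i : ℝ))
              - (∑ i ∈ Finset.univ.filter (· ≤ j), (c i : ℝ) * Z i ω)}
      ≤ ENNReal.ofReal
          (Real.exp (-(u ^ 2) /
            (2 * cmax * (p * (∑ i : Fin r, (c i : ℝ)))))) :=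
  weighted_chernoff_lower_general P r c cmax hcmax p hp0 hp1 Z hmeas hindep hbern u hu
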